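/- arXiv:2104.14508 — 3 statements merged into one kernel-verified Lean document; each statement's English description precedes it below -/
import Mathlib

section
/- Let m be a squarefree positive integer and s ≥ 1 a positive integer. Then Ξ(ms) ≤ (s‡)³ · Ξ(s)^{4/3}. -/
open scoped BigOperators

/-- squarefree part: product of primes exactly dividing n -/
def sflat (n : ℕ) : ℕ := ∏ p ∈ n.primeFactors.filter (fun p => n.factorization p = 1), p

/-- squarefull part: product of prime powers p^ν exactly dividing n with ν ≥ 2 -/
def ssharp (n : ℕ) : ℕ := ∏ p ∈ n.primeFactors.filter (fun p => 2 ≤ n.factorization p), p ^ n.factorization p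

/-- Ξ(n): product of prime powers p^ν exactly dividing n with ν ≥ 3 -/
def sXi (n : ℕ) : ℕ := ∏ p ∈ n.primeFactors.filter (fun p => 3 ≤ n.factorization p), p ^ n.factorization p

/-- n‡: product of primes p with p² exactly dividing n -/
def sddag (n : ℕ) : ℕ := ∏ p ∈ n.primeFactors.filter (fun p => n.factorization p = 2), p

theorem stmt_7 (m s : ℕ) (hm : Squarefree m) (hs : 1 ≤ s) :
    (sXi (m * s) : ℝ) ≤ (sddag s : ℝ) ^ 3 * (sXi s : ℝ) ^ ((4 : ℝ) / 3) := by
  have hm0 : m ≠ 0 := hm.ne_zero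
  have hs0 : s ≠ 0 := by omega
  have hfac : ∀ p, (m * s).factorization p = m.factorization p + s.factorization p := by
    intro p; rw [Nat.factorization_mul hm0 hs0]; rfl
  have hm1 : ∀ p, m.factorization p ≤ 1 := fun p => hm.natFactorization_le_one p
  set F := (m * s).primeFactors.filter (fun p => 3 ≤ (m * s).factorization p) with hFdef
  set A := F.filter (fun p => s.factorization p = 2) with hAdef
  set B := F.filter (fun p => ¬ s.factorization p = 2) with hBdef
  -- every prime in F is prime and ≥ 2, and s.factorization p ≥ 2
  have hFprime : ∀ p ∈ F, p.Prime := by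
    intro p hp
    exact (Nat.mem_primeFactors.mp (Finset.mem_filter.mp hp).1).1
  have hFs2 : ∀ p ∈ F, 2 ≤ s.factorization p := by
    intro p hp
    have h3 : 3 ≤ (m * s).factorization p := (Finset.mem_filter.mp hp).2
    have := hfac p
    have := hm1 p
    omega
  have hFreal : ∀ p ∈ F, (1 : ℝ) ≤ (p : ℝ) := by
    intro p hp
    exact_mod_cast (hFprime p hp).one_lt.le
  -- split the product
  have hsplit : (sXi (m * s) : ℝ)
      = (∏ p ∈ A, (p : ℝ) ^ ((m * s).factorization p)) *
        (∏ p ∈ B, (p : ℝ) ^ ((m * s).factorization p)) := by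
    rw [hAdef, hBdef, Finset.prod_filter_mul_prod_filter_not]
    rw [sXi]
    push_cast
    rfl
  -- bound the A part
  have hApos : (0:ℝ) ≤ ∏ p ∈ A, (p : ℝ) := by
    apply Finset.prod_nonneg
    intro p hp; positivity
  have hAbound : (∏ p ∈ A, (p : ℝ) ^ ((m * s).factorization p)) ≤ (sddag s : ℝ) ^ 3 := by
    have h1 : (∏ p ∈ A, (p : ℝ) ^ ((m * s).factorization p)) ≤ ∏ p ∈ A, (p : ℝ) ^ 3 := by
      apply Finset.prod_le_prod
      · intro p hp; positivity
      · intro p hp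
        have hp' := Finset.mem_filter.mp hp
        have hν : (m * s).factorization p ≤ 3 := by
          have := hfac p; have := hm1 p; have := hp'.2; omega
        exact pow_le_pow_right₀ (hFreal p hp'.1) hν
    have h2 : (∏ p ∈ A, (p : ℝ) ^ 3) = (∏ p ∈ A, (p : ℝ)) ^ 3 := by
      rw [Finset.prod_pow]
    have hsub : A ⊆ s.primeFactors.filter (fun p => s.factorization p = 2) := by
      intro p hp
      have hp' := Finset.mem_filter.mp hp
      have hprime := hFprime p hp'.1
      have h2' : s.factorization p = 2 := hp'.2
      refine Finset.mem_filter.mpr ⟨Nat.mem_primeFactors.mpr ⟨hprime, ?_, hs0⟩, h2'⟩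
      exact Nat.dvd_of_factorization_pos (by omega)
    have h3 : (∏ p ∈ A, (p : ℝ)) ≤ (sddag s : ℝ) := by
      have hnat : (∏ p ∈ A, p) ≤ sddag s := by
        rw [sddag]
        refine Finset.prod_le_prod_of_subset_of_one_le' hsub ?_
        intro p hp _
        have hprime := (Nat.mem_primeFactors.mp (Finset.mem_filter.mp hp).1).1
        exact hprime.one_lt.le
      calc (∏ p ∈ A, (p : ℝ)) = ((∏ p ∈ A, p : ℕ) : ℝ) := by push_cast; rfl
        _ ≤ (sddag s : ℝ) := by exact_mod_cast hnat
    calc (∏ p ∈ A, (p : ℝ) ^ ((m * s).factorization p)) ≤ (∏ p ∈ A, (p : ℝ)) ^ 3 := by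
          rw [← h2]; exact h1
      _ ≤ (sddag s : ℝ) ^ 3 := by
          exact pow_le_pow_left₀ hApos h3 3
  -- bound the B part
  have hBbound : (∏ p ∈ B, (p : ℝ) ^ ((m * s).factorization p))
      ≤ (sXi s : ℝ) ^ ((4 : ℝ) / 3) := by
    have hBs3 : ∀ p ∈ B, 3 ≤ s.factorization p := by
      intro p hp
      have hp' := Finset.mem_filter.mp hp
      have := hFs2 p hp'.1
      have := hp'.2
      omega
    have h1 : (∏ p ∈ B, (p : ℝ) ^ ((m * s).factorization p))
        ≤ ∏ p ∈ B, ((p : ℝ) ^ (s.factorization p)) ^ ((4:ℝ)/3) := by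
      apply Finset.prod_le_prod
      · intro p hp; positivity
      · intro p hp
        have hp1 : (1:ℝ) ≤ (p:ℝ) := hFreal p (Finset.mem_filter.mp hp).1
        have hp0 : (0:ℝ) ≤ (p:ℝ) := by linarith
        rw [← Real.rpow_natCast (p:ℝ) (s.factorization p), ← Real.rpow_natCast (p:ℝ),
          ← Real.rpow_mul hp0]
        apply Real.rpow_le_rpow_of_exponent_le hp1
        have hν : 3 * ((m * s).factorization p) ≤ 4 * s.factorization p := by
          have := hfac p; have := hm1 p; have := hBs3 p hp; omega
        have : (3:ℝ) * ((m * s).factorization p : ℝ) ≤ 4 * (s.factorization p : ℝ) := by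
          exact_mod_cast hν
        linarith
    have h2 : (∏ p ∈ B, ((p : ℝ) ^ (s.factorization p)) ^ ((4:ℝ)/3))
        = (∏ p ∈ B, (p : ℝ) ^ (s.factorization p)) ^ ((4:ℝ)/3) := by
      apply Real.finset_prod_rpow
      intro p hp; positivity
    have hsub : B ⊆ s.primeFactors.filter (fun p => 3 ≤ s.factorization p) := by
      intro p hp
      have hp' := Finset.mem_filter.mp hp
      have hprime := hFprime p hp'.1
      have h3' := hBs3 p hp
      refine Finset.mem_filter.mpr ⟨Nat.mem_primeFactors.mpr ⟨hprime, ?_, hs0⟩, h3'⟩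
      exact Nat.dvd_of_factorization_pos (by omega)
    have h3 : (∏ p ∈ B, (p : ℝ) ^ (s.factorization p)) ≤ (sXi s : ℝ) := by
      have hnat : (∏ p ∈ B, p ^ s.factorization p) ≤ sXi s := by
        rw [sXi]
        refine Finset.prod_le_prod_of_subset_of_one_le' hsub ?_
        intro p hp _
        have hprime := (Nat.mem_primeFactors.mp (Finset.mem_filter.mp hp).1).1
        exact Nat.one_le_pow _ _ hprime.pos
      calc (∏ p ∈ B, (p : ℝ) ^ (s.factorization p))
          = ((∏ p ∈ B, p ^ s.factorization p : ℕ) : ℝ) := by push_cast; rfl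
        _ ≤ (sXi s : ℝ) := by exact_mod_cast hnat
    calc (∏ p ∈ B, (p : ℝ) ^ ((m * s).factorization p))
        ≤ (∏ p ∈ B, (p : ℝ) ^ (s.factorization p)) ^ ((4:ℝ)/3) := by rw [← h2]; exact h1
      _ ≤ (sXi s : ℝ) ^ ((4:ℝ)/3) := by
          apply Real.rpow_le_rpow ?_ h3 (by norm_num)
          apply Finset.prod_nonneg
          intro p hp; positivity
  rw [hsplit]
  apply mul_le_mul hAbound hBbound ?_ ?_
  · apply Finset.prod_nonneg; intro p hp; positivity
  · positivity
end

section
/- For every fixed real t with 0 ≤ t ≤ 1/2 and all real x ≥ 2, the sum over positive integers n ≤ x of (n♭)^{-t} is O(x^{1-t} log x), where the implied constant may depend on t. -/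
open Finset


open scoped BigOperators

def apart (n : ℕ) : ℕ := ∏ p ∈ n.primeFactors.filter (fun p => 2 ≤ n.factorization p),
  p ^ ((n.factorization p - if Odd (n.factorization p) then 3 else 0) / 2)

def bpart (n : ℕ) : ℕ := ∏ p ∈ n.primeFactors.filter
  (fun p => 2 ≤ n.factorization p ∧ Odd (n.factorization p)), p

lemma sflat_pos (n : ℕ) : 0 < sflat n :=
  Finset.prod_pos fun _ hp => (Nat.prime_of_mem_primeFactors (Finset.mem_filter.mp hp).1).pos

lemma apart_pos (n : ℕ) : 0 < apart n :=
  Finset.prod_pos fun _ hp =>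
    pow_pos (Nat.prime_of_mem_primeFactors (Finset.mem_filter.mp hp).1).pos _

lemma bpart_pos (n : ℕ) : 0 < bpart n :=
  Finset.prod_pos fun _ hp => (Nat.prime_of_mem_primeFactors (Finset.mem_filter.mp hp).1).pos

lemma decomp (n : ℕ) (hn : n ≠ 0) : n = sflat n * (apart n) ^ 2 * (bpart n) ^ 3 := by
  conv_lhs => rw [← Nat.factorization_prod_pow_eq_self hn]
  rw [Nat.prod_factorization_eq_prod_primeFactors]
  rw [← Finset.prod_filter_mul_prod_filter_not n.primeFactors (fun p => n.factorization p = 1)]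
  have h1 : ∏ p ∈ n.primeFactors.filter (fun p => n.factorization p = 1), p ^ n.factorization p
      = sflat n := by
    apply Finset.prod_congr rfl
    intro p hp
    simp only [Finset.mem_filter] at hp
    rw [hp.2, pow_one]
  have h2 : n.primeFactors.filter (fun p => ¬ n.factorization p = 1)
      = n.primeFactors.filter (fun p => 2 ≤ n.factorization p) := by
    apply Finset.filter_congr
    intro p hp
    obtain ⟨hpp, hpd, -⟩ := Nat.mem_primeFactors.mp hp
    have := hpp.factorization_pos_of_dvd hn hpd
    constructor <;> intro h <;> omega
  rw [h1, h2, mul_assoc]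
  congr 1
  have h3 : ∀ p ∈ n.primeFactors.filter (fun p => 2 ≤ n.factorization p),
      p ^ n.factorization p =
      (p ^ ((n.factorization p - if Odd (n.factorization p) then 3 else 0) / 2)) ^ 2 *
      (if (2 ≤ n.factorization p ∧ Odd (n.factorization p)) then p else 1) ^ 3 := by
    intro p hp
    simp only [Finset.mem_filter] at hp
    set e := n.factorization p with he
    rcases Nat.even_or_odd e with hev | hod
    · have hno : ¬ Odd e := by simpa [Nat.not_odd_iff_even] using hev
      simp only [hno, if_neg, ite_false, and_false, if_false]
      rw [Nat.sub_zero, one_pow, mul_one, ← pow_mul]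
      congr 1
      obtain ⟨k, hk⟩ := hev
      omega
    · simp only [hod, ite_true, hp.2, and_true, if_true]
      rw [← pow_mul, ← pow_add]
      congr 1
      obtain ⟨k, hk⟩ := hod
      omega
  rw [Finset.prod_congr rfl h3, Finset.prod_mul_distrib, Finset.prod_pow, Finset.prod_pow]
  congr 2
  rw [← Finset.prod_filter, Finset.filter_filter]
  apply Finset.prod_congr _ (fun _ _ => rfl)
  apply Finset.filter_congr
  intro p hp
  simp only [and_self_left]

-- === analytic lemmas ===

lemma anti_rpow (r : ℝ) (hr : 0 ≤ r) (M : ℕ) :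
    AntitoneOn (fun u : ℝ => u ^ (-r)) (Set.Icc (1:ℕ) (M:ℕ)) := by
  intro x hx y hy hxy
  exact Real.rpow_le_rpow_of_nonpos (lt_of_lt_of_le one_pos (by exact_mod_cast hx.1)) hxy
    (neg_nonpos.mpr hr)

lemma sum_rpow_le_int (r : ℝ) (hr : 0 ≤ r) (M : ℕ) (hM : 1 ≤ M) :
    ∑ m ∈ Icc 1 M, (m:ℝ) ^ (-r) ≤ 1 + ∫ u in (1:ℝ)..(M:ℝ), u ^ (-r) := by
  have key := (anti_rpow r hr M).sum_le_integral_Ico hM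
  have h1 : ∑ m ∈ Icc 1 M, (m:ℝ) ^ (-r)
      = 1 + ∑ i ∈ Finset.Ico 1 M, ((i:ℝ) + 1) ^ (-r) := by
    rw [← Finset.Ico_add_one_right_eq_Icc, Finset.sum_eq_sum_Ico_succ_bot (by omega), Nat.cast_one,
      Real.one_rpow]
    congr 1
    rw [show Finset.Ico (1+1) (M+1) = Finset.Ico (1+1) (M+1) from rfl,
      ← Finset.sum_Ico_add]
    apply Finset.sum_congr rfl
    intro i hi
    push_cast
    ring_nf
  rw [h1]
  have h2 : ∀ i : ℕ, ((i:ℝ)+1) ^ (-r) = (fun u : ℝ => u ^ (-r)) ((i+1 : ℕ) : ℝ) := by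
    intro i; push_cast; ring_nf
  calc 1 + ∑ i ∈ Finset.Ico 1 M, ((i:ℝ) + 1) ^ (-r)
      = 1 + ∑ i ∈ Finset.Ico 1 M, (fun u : ℝ => u ^ (-r)) ((i+1 : ℕ) : ℝ) := by
        congr 1; exact Finset.sum_congr rfl (fun i _ => h2 i)
    _ ≤ 1 + ∫ u in ((1:ℕ):ℝ)..((M:ℕ):ℝ), u ^ (-r) := add_le_add_right key 1
    _ = 1 + ∫ u in (1:ℝ)..(M:ℝ), u ^ (-r) := by norm_num

lemma sumL1 (t : ℝ) (ht0 : 0 ≤ t) (ht : t ≤ 1/2) (M : ℕ) :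
    ∑ m ∈ Icc 1 M, (m:ℝ) ^ (-t) ≤ 3 * (M:ℝ) ^ (1 - t) := by
  rcases Nat.eq_zero_or_pos M with hM | hM
  · subst hM; simp [Real.zero_rpow (by nlinarith : (1:ℝ) - t ≠ 0)]
  have h := sum_rpow_le_int t ht0 M hM
  have hint : ∫ u in (1:ℝ)..(M:ℝ), u ^ (-t) = ((M:ℝ) ^ (-t+1) - 1 ^ (-t+1)) / (-t+1) :=
    integral_rpow (Or.inl (by linarith))
  have hM1 : (1:ℝ) ≤ (M:ℝ) := by exact_mod_cast hM
  have hMt : (1:ℝ) ≤ (M:ℝ) ^ (1-t) := Real.one_le_rpow hM1 (by linarith)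
  have heq : (-t) + 1 = 1 - t := by ring
  rw [hint, heq, Real.one_rpow] at h
  have h2 : ((M:ℝ) ^ (1-t) - 1) / (1-t) ≤ 2 * (M:ℝ) ^ (1-t) := by
    rw [div_le_iff₀ (by linarith)]
    nlinarith
  linarith

lemma sumL2 (M : ℕ) : ∑ a ∈ Icc 1 M, (a:ℝ) ^ (-1:ℝ) ≤ 1 + Real.log M := by
  have : ∑ a ∈ Icc 1 M, (a:ℝ) ^ (-1:ℝ) = (harmonic M : ℝ) := by
    rw [harmonic_eq_sum_Icc]
    push_cast
    exact Finset.sum_congr rfl (fun a _ => Real.rpow_neg_one _)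
  rw [this]
  exact harmonic_le_one_add_log M

lemma sumL3 (M : ℕ) : ∑ b ∈ Icc 1 M, (b:ℝ) ^ (-(3/2 : ℝ)) ≤ 3 := by
  rcases Nat.eq_zero_or_pos M with hM | hM
  · subst hM; simp
  have h := sum_rpow_le_int (3/2) (by norm_num) M hM
  have hM1 : (1:ℝ) ≤ (M:ℝ) := by exact_mod_cast hM
  have hint : ∫ u in (1:ℝ)..(M:ℝ), u ^ (-(3/2:ℝ))
      = ((M:ℝ) ^ (-(3/2:ℝ)+1) - 1 ^ (-(3/2:ℝ)+1)) / (-(3/2:ℝ)+1) :=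
    integral_rpow (Or.inr ⟨by norm_num, by
      rw [Set.uIcc_of_le hM1]
      intro hmem
      exact absurd hmem.1 (by norm_num)⟩)
  rw [hint, Real.one_rpow] at h
  have hpos : (0:ℝ) ≤ (M:ℝ) ^ (-(3/2:ℝ)+1) := Real.rpow_nonneg (by linarith) _
  have : ((M:ℝ) ^ (-(3/2:ℝ)+1) - 1) / (-(3/2:ℝ)+1) ≤ 2 := by
    rw [div_le_iff_of_neg (by norm_num)]
    nlinarith
  linarith

lemma term_bound (t x : ℝ) (ht : t ≤ 1/2) (hx : 0 < x) (a b : ℕ)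
    (ha : 1 ≤ a) (hb : 1 ≤ b) :
    (x / ((a:ℝ)^2 * (b:ℝ)^3)) ^ (1-t) ≤ x^(1-t) * (a:ℝ)^(-1:ℝ) * (b:ℝ)^(-(3/2:ℝ)) := by
  have ha1 : (1:ℝ) ≤ (a:ℝ) := by exact_mod_cast ha
  have hb1 : (1:ℝ) ≤ (b:ℝ) := by exact_mod_cast hb
  have ha0 : (0:ℝ) ≤ (a:ℝ) := by linarith
  have hb0 : (0:ℝ) ≤ (b:ℝ) := by linarith
  rw [Real.div_rpow hx.le (by positivity), Real.mul_rpow (by positivity) (by positivity)]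
  have hA : (a:ℝ) ^ (1:ℝ) ≤ ((a:ℝ)^2) ^ (1-t) := by
    rw [← Real.rpow_natCast (a:ℝ) 2, ← Real.rpow_mul ha0]
    exact Real.rpow_le_rpow_of_exponent_le ha1 (by push_cast; nlinarith)
  have hB : (b:ℝ) ^ (3/2:ℝ) ≤ ((b:ℝ)^3) ^ (1-t) := by
    rw [← Real.rpow_natCast (b:ℝ) 3, ← Real.rpow_mul hb0]
    exact Real.rpow_le_rpow_of_exponent_le hb1 (by push_cast; nlinarith)
  rw [Real.rpow_one] at hA
  have hBpos : (0:ℝ) < (b:ℝ) ^ (3/2:ℝ) := Real.rpow_pos_of_pos (by linarith) _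
  rw [Real.rpow_neg ha0, Real.rpow_neg hb0, Real.rpow_one]
  have hxpow : (0:ℝ) ≤ x ^ (1-t) := Real.rpow_nonneg hx.le _
  calc x ^ (1-t) / (((a:ℝ)^2)^(1-t) * ((b:ℝ)^3)^(1-t))
      ≤ x ^ (1-t) / ((a:ℝ) * (b:ℝ)^(3/2:ℝ)) := by
        apply div_le_div_of_nonneg_left hxpow (by positivity)
        exact mul_le_mul hA hB hBpos.le (by positivity)
    _ = x ^ (1-t) * ((a:ℝ))⁻¹ * ((b:ℝ) ^ (3/2:ℝ))⁻¹ := by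
        field_simp


theorem stmt_10 (t : ℝ) (ht0 : 0 ≤ t) (ht : t ≤ 1 / 2) :
    ∃ C : ℝ, ∀ x : ℝ, 2 ≤ x →
      ∑ n ∈ Finset.Icc 1 ⌊x⌋₊, (sflat n : ℝ) ^ (-t) ≤ C * x ^ (1 - t) * Real.log x := by
  use 27
  intro x hx
  have hx0 : (0:ℝ) < x := by linarith
  set N := ⌊x⌋₊ with hNdef
  have hN1 : 1 ≤ N := by
    rw [hNdef]
    exact Nat.le_floor (by exact_mod_cast (by linarith : (1:ℝ) ≤ x))
  have hNx : (N:ℝ) ≤ x := Nat.floor_le hx0.le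
  -- the injection
  set F : ℕ → Σ _ : ℕ × ℕ, ℕ := fun n => ⟨(apart n, bpart n), sflat n⟩ with hF
  set T : Finset (Σ _ : ℕ × ℕ, ℕ) :=
    (Finset.Icc 1 N ×ˢ Finset.Icc 1 N).sigma
      (fun ab => Finset.Icc 1 (N / (ab.1 ^ 2 * ab.2 ^ 3))) with hT
  have hinj : ∀ n ∈ Finset.Icc 1 N, ∀ m ∈ Finset.Icc 1 N, F n = F m → n = m := by
    intro n hn m hm h
    simp only [hF, Sigma.mk.inj_iff, Prod.mk.injEq, heq_eq_eq] at h
    obtain ⟨⟨ha, hb⟩, hs⟩ := h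
    have hn0 : n ≠ 0 := by simp only [Finset.mem_Icc] at hn; omega
    have hm0 : m ≠ 0 := by simp only [Finset.mem_Icc] at hm; omega
    rw [decomp n hn0, decomp m hm0, ha, hb, hs]
  have hsub : (Finset.Icc 1 N).image F ⊆ T := by
    intro s hs
    obtain ⟨n, hn, rfl⟩ := Finset.mem_image.mp hs
    simp only [Finset.mem_Icc] at hn
    have hn0 : n ≠ 0 := by omega
    have hdec := decomp n hn0
    simp only [hT, hF, Finset.mem_sigma, Finset.mem_product, Finset.mem_Icc]
    have hda : apart n ∣ sflat n * apart n ^ 2 * bpart n ^ 3 :=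
      ⟨sflat n * apart n * bpart n ^ 3, by ring⟩
    have hdb : bpart n ∣ sflat n * apart n ^ 2 * bpart n ^ 3 :=
      ⟨sflat n * apart n ^ 2 * bpart n ^ 2, by ring⟩
    rw [← hdec] at hda hdb
    have hkey : sflat n * (apart n ^ 2 * bpart n ^ 3) = n := by
      rw [← mul_assoc, ← hdec]
    refine ⟨⟨⟨apart_pos n, ?_⟩, ⟨bpart_pos n, ?_⟩⟩, ⟨sflat_pos n, ?_⟩⟩
    · exact le_trans (Nat.le_of_dvd (by omega) hda) hn.2
    · exact le_trans (Nat.le_of_dvd (by omega) hdb) hn.2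
    · rw [Nat.le_div_iff_mul_le (Nat.mul_pos (pow_pos (apart_pos n) 2) (pow_pos (bpart_pos n) 3))]
      omega
  have hgnonneg : ∀ s : (Σ _ : ℕ × ℕ, ℕ), (0:ℝ) ≤ ((s.2 : ℝ)) ^ (-t) :=
    fun s => Real.rpow_nonneg (Nat.cast_nonneg _) _
  calc ∑ n ∈ Finset.Icc 1 N, (sflat n : ℝ) ^ (-t)
      = ∑ s ∈ (Finset.Icc 1 N).image F, ((s.2 : ℝ)) ^ (-t) := by
        rw [Finset.sum_image hinj]
    _ ≤ ∑ s ∈ T, ((s.2 : ℝ)) ^ (-t) :=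
        Finset.sum_le_sum_of_subset_of_nonneg hsub (fun s _ _ => hgnonneg s)
    _ = ∑ ab ∈ Finset.Icc 1 N ×ˢ Finset.Icc 1 N,
          ∑ m ∈ Finset.Icc 1 (N / (ab.1 ^ 2 * ab.2 ^ 3)), ((m:ℝ)) ^ (-t) := by
        rw [hT, Finset.sum_sigma]
    _ ≤ ∑ ab ∈ Finset.Icc 1 N ×ˢ Finset.Icc 1 N,
          3 * (x ^ (1-t) * (ab.1:ℝ)^(-1:ℝ) * (ab.2:ℝ)^(-(3/2:ℝ))) := by
        apply Finset.sum_le_sum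
        intro ab hab
        simp only [Finset.mem_product, Finset.mem_Icc] at hab
        have ha1 : 1 ≤ ab.1 := hab.1.1
        have hb1 : 1 ≤ ab.2 := hab.2.1
        have hk : 0 < ab.1 ^ 2 * ab.2 ^ 3 := by positivity
        calc ∑ m ∈ Finset.Icc 1 (N / (ab.1 ^ 2 * ab.2 ^ 3)), ((m:ℝ)) ^ (-t)
            ≤ 3 * ((N / (ab.1 ^ 2 * ab.2 ^ 3) : ℕ) : ℝ) ^ (1-t) := sumL1 t ht0 ht _
          _ ≤ 3 * (x / ((ab.1:ℝ)^2 * (ab.2:ℝ)^3)) ^ (1-t) := by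
              have ha0 : (0:ℝ) < (ab.1:ℝ) := by exact_mod_cast ha1
              have hb0 : (0:ℝ) < (ab.2:ℝ) := by exact_mod_cast hb1
              have hkpos : (0:ℝ) < (ab.1:ℝ)^2 * (ab.2:ℝ)^3 :=
                mul_pos (pow_pos ha0 2) (pow_pos hb0 3)
              gcongr 3 * ?_
              apply Real.rpow_le_rpow (Nat.cast_nonneg _) _ (by linarith)
              calc ((N / (ab.1 ^ 2 * ab.2 ^ 3) : ℕ) : ℝ)
                  ≤ (N : ℝ) / ((ab.1 ^ 2 * ab.2 ^ 3 : ℕ) : ℝ) := Nat.cast_div_le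
                _ = (N : ℝ) / ((ab.1:ℝ)^2 * (ab.2:ℝ)^3) := by push_cast; ring_nf
                _ ≤ x / ((ab.1:ℝ)^2 * (ab.2:ℝ)^3) := by
                    rw [div_eq_mul_inv, div_eq_mul_inv]
                    exact mul_le_mul_of_nonneg_right hNx (by positivity)
          _ ≤ 3 * (x ^ (1-t) * (ab.1:ℝ)^(-1:ℝ) * (ab.2:ℝ)^(-(3/2:ℝ))) := by
              gcongr 3 * ?_
              exact term_bound t x ht hx0 ab.1 ab.2 ha1 hb1
    _ = 3 * x ^ (1-t) * ((∑ a ∈ Finset.Icc 1 N, (a:ℝ)^(-1:ℝ)) *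
          (∑ b ∈ Finset.Icc 1 N, (b:ℝ)^(-(3/2:ℝ)))) := by
        have h := Finset.sum_mul_sum (Finset.Icc 1 N) (Finset.Icc 1 N)
          (fun a : ℕ => (a:ℝ)^(-1:ℝ)) (fun b : ℕ => (b:ℝ)^(-(3/2:ℝ)))
        rw [Finset.sum_product, h, Finset.mul_sum]
        refine Finset.sum_congr rfl fun a _ => ?_
        rw [Finset.mul_sum]
        refine Finset.sum_congr rfl fun b _ => ?_
        ring
    _ ≤ 3 * x ^ (1-t) * ((1 + Real.log N) * 3) := by
        have hxp : (0:ℝ) ≤ x ^ (1-t) := Real.rpow_nonneg hx0.le _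
        have hs2 := sumL2 N
        have hs3 := sumL3 N
        have hs2nn : (0:ℝ) ≤ ∑ a ∈ Finset.Icc 1 N, (a:ℝ)^(-1:ℝ) :=
          Finset.sum_nonneg fun a _ => Real.rpow_nonneg (Nat.cast_nonneg _) _
        have hs3nn : (0:ℝ) ≤ ∑ b ∈ Finset.Icc 1 N, (b:ℝ)^(-(3/2:ℝ)) :=
          Finset.sum_nonneg fun b _ => Real.rpow_nonneg (Nat.cast_nonneg _) _
        have hlogN : (0:ℝ) ≤ 1 + Real.log N := by
          have : (0:ℝ) ≤ Real.log N := Real.log_nonneg (by exact_mod_cast hN1)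
          linarith
        gcongr
    _ ≤ 27 * x ^ (1-t) * Real.log x := by
        have hlogx : Real.log 2 ≤ Real.log x := Real.log_le_log (by norm_num) hx
        have hlog2 : (1/2:ℝ) < Real.log 2 := by
          have := Real.log_two_gt_d9
          linarith
        have hlogN : Real.log N ≤ Real.log x :=
          Real.log_le_log (by exact_mod_cast hN1) hNx
        have hxp : (0:ℝ) ≤ x ^ (1-t) := Real.rpow_nonneg hx0.le _
        have h1 : 1 + Real.log N ≤ 3 * Real.log x := by
          have : (1:ℝ) ≤ 2 * Real.log x := by linarith
          linarith
        nlinarith [Real.rpow_nonneg hx0.le (1-t)]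
end

section
/- For complex s with Re(s) > 1 and real t ≤ 1/2, the Dirichlet series ∑_{n≥1} (n♯)^t n^{-s} factors as ζ(s) ζ(2s − 2t) A_t(s), where A_t(s) is given by an Euler product converging absolutely for Re(s) > max{t + 1/3, 1/2}. -/
open scoped BigOperators

private lemma ssharp_zero : ssharp 0 = 1 := by simp [ssharp]

private lemma ssharp_one : ssharp 1 = 1 := by simp [ssharp]

private lemma ssharp_pos (n : ℕ) : 0 < ssharp n := by
  refine Finset.prod_pos fun p hp => ?_
  exact pow_pos (Nat.prime_of_mem_primeFactors (Finset.mem_of_mem_filter _ hp)).pos _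

private lemma ssharp_prime_pow {p : ℕ} (hp : p.Prime) (ν : ℕ) :
    ssharp (p ^ ν) = if ν ≤ 1 then 1 else p ^ ν := by
  rcases Nat.eq_zero_or_pos ν with h0 | hν
  · subst h0; simp [ssharp]
  · have hpf : (p ^ ν).primeFactors = {p} := Nat.primeFactors_prime_pow hν.ne' hp
    have hfac : (p ^ ν).factorization p = ν := by
      rw [hp.factorization_pow, Finsupp.single_eq_same]
    rw [ssharp, hpf, Finset.filter_singleton]
    by_cases h : ν ≤ 1
    · rw [if_pos h]
      have h2 : ¬ (2 ≤ (p ^ ν).factorization p) := by rw [hfac]; omega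
      rw [if_neg h2, Finset.prod_empty]
    · rw [if_neg h]
      have h2 : 2 ≤ (p ^ ν).factorization p := by rw [hfac]; omega
      rw [if_pos h2, Finset.prod_singleton, hfac]

private lemma ssharp_mul {m n : ℕ} (hmn : Nat.Coprime m n) (hm : m ≠ 0) (hn : n ≠ 0) :
    ssharp (m * n) = ssharp m * ssharp n := by
  have hdisj : Disjoint m.primeFactors n.primeFactors := Nat.Coprime.disjoint_primeFactors hmn
  have hkeym : ∀ p ∈ m.primeFactors, (m * n).factorization p = m.factorization p := by
    intro p hp
    have hpn : ¬ p ∣ n := fun hdvd =>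
      (Nat.Prime.one_lt (Nat.prime_of_mem_primeFactors hp)).ne'
        ((Nat.Coprime.coprime_dvd_left
          (Nat.dvd_of_mem_primeFactors hp) hmn).eq_one_of_dvd hdvd)
    rw [Nat.factorization_mul hm hn, Finsupp.add_apply,
      Nat.factorization_eq_zero_of_not_dvd hpn, add_zero]
  have hkeyn : ∀ p ∈ n.primeFactors, (m * n).factorization p = n.factorization p := by
    intro p hp
    have hpm : ¬ p ∣ m := fun hdvd =>
      (Nat.Prime.one_lt (Nat.prime_of_mem_primeFactors hp)).ne'
        ((Nat.Coprime.coprime_dvd_left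
          (Nat.dvd_of_mem_primeFactors hp) hmn.symm).eq_one_of_dvd hdvd)
    rw [Nat.factorization_mul hm hn, Finsupp.add_apply,
      Nat.factorization_eq_zero_of_not_dvd hpm, zero_add]
  rw [ssharp, Nat.primeFactors_mul hm hn, Finset.filter_union,
    Finset.prod_union (Finset.disjoint_filter_filter hdisj)]
  congr 1
  · rw [show m.primeFactors.filter (fun p => 2 ≤ (m * n).factorization p)
        = m.primeFactors.filter (fun p => 2 ≤ m.factorization p) from
      Finset.filter_congr fun p hp => by rw [hkeym p hp]]
    exact Finset.prod_congr rfl fun p hp => by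
      rw [hkeym p (Finset.mem_of_mem_filter _ hp)]
  · rw [show n.primeFactors.filter (fun p => 2 ≤ (m * n).factorization p)
        = n.primeFactors.filter (fun p => 2 ≤ n.factorization p) from
      Finset.filter_congr fun p hp => by rw [hkeyn p hp]]
    exact Finset.prod_congr rfl fun p hp => by
      rw [hkeyn p (Finset.mem_of_mem_filter _ hp)]

private lemma ssharp_dvd {n : ℕ} (hn : n ≠ 0) : ssharp n ∣ n := by
  conv_rhs => rw [← Nat.factorization_prod_pow_eq_self hn]
  rw [Finsupp.prod]
  rw [Nat.support_factorization]
  exact Finset.prod_dvd_prod_of_subset _ _ _ (Finset.filter_subset _ _)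

private def Dfun (n : ℕ) : ℕ :=
  ∏ p ∈ n.primeFactors.filter (fun p => 2 ≤ n.factorization p),
    p ^ ((n.factorization p - 3 * (n.factorization p % 2)) / 2)

private def Efun (n : ℕ) : ℕ :=
  ∏ p ∈ n.primeFactors.filter (fun p => 2 ≤ n.factorization p), p ^ (n.factorization p % 2)

private lemma Dfun_pos (n : ℕ) : 0 < Dfun n :=
  Finset.prod_pos fun p hp =>
    pow_pos (Nat.prime_of_mem_primeFactors (Finset.mem_of_mem_filter _ hp)).pos _

private lemma Efun_pos (n : ℕ) : 0 < Efun n :=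
  Finset.prod_pos fun p hp =>
    pow_pos (Nat.prime_of_mem_primeFactors (Finset.mem_of_mem_filter _ hp)).pos _

private lemma Dfun_sq_mul_Efun_cube (n : ℕ) : Dfun n ^ 2 * Efun n ^ 3 = ssharp n := by
  rw [Dfun, Efun, ssharp, ← Finset.prod_pow, ← Finset.prod_pow, ← Finset.prod_mul_distrib]
  refine Finset.prod_congr rfl fun p hp => ?_
  have h2 : 2 ≤ n.factorization p := (Finset.mem_filter.mp hp).2
  rw [← pow_mul, ← pow_mul, ← pow_add]
  congr 1
  omega

set_option maxHeartbeats 1000000 in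
private lemma summable_norm_f (t : ℝ) (ht : t ≤ 1/2) (s : ℂ) (hs : 1 < s.re) :
    Summable (fun n : ℕ => ‖(ssharp n : ℂ) ^ (t:ℂ) * (n:ℂ) ^ (-s)‖) := by
  classical
  set σ := s.re with hσdef
  have hσ0 : (0:ℝ) < σ := lt_trans one_pos hs
  have hs0 : s ≠ 0 := fun h => by rw [h, Complex.zero_re] at hσdef; linarith [hσdef ▸ hσ0]
  set g : ℕ × ℕ × ℕ → ℝ :=
    fun x => ((x.1:ℝ) ^ (1 - 2*σ)) * (((x.2.1:ℝ) ^ (2 - 3*σ)) * ((x.2.2:ℝ) ^ (-σ))) with hgdef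
  have hg23 : Summable (fun y : ℕ × ℕ => ((y.1:ℝ) ^ (2 - 3*σ)) * ((y.2:ℝ) ^ (-σ))) :=
    Summable.mul_of_nonneg (Real.summable_nat_rpow.mpr (by linarith))
      (Real.summable_nat_rpow.mpr (by linarith))
      (fun n => by positivity) (fun n => by positivity)
  have hg : Summable g :=
    Summable.mul_of_nonneg (Real.summable_nat_rpow.mpr (by linarith : 1 - 2*σ < -1)) hg23
      (fun n => by positivity) (fun y => by positivity)
  set Φ : ℕ → ℕ × ℕ × ℕ := fun n => (Dfun n, Efun n, n / ssharp n) with hΦdef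
  have hrec : ∀ n, (Φ n).1 ^ 2 * ((Φ n).2.1 ^ 3 * (Φ n).2.2) = n := by
    intro n
    rcases eq_or_ne n 0 with rfl | hn
    · simp [hΦdef, Dfun, Efun]
    · show Dfun n ^ 2 * (Efun n ^ 3 * (n / ssharp n)) = n
      rw [← mul_assoc, Dfun_sq_mul_Efun_cube, Nat.mul_div_cancel' (ssharp_dvd hn)]
  have hinj : Function.Injective Φ := fun x y hxy => by rw [← hrec x, ← hrec y, hxy]
  refine Summable.of_nonneg_of_le (fun n => norm_nonneg _) ?_ (hg.comp_injective hinj)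
  intro n
  rcases eq_or_ne n 0 with rfl | hn
  · have hΦ0 : Φ 0 = (1, 1, 0) := by simp [hΦdef, Dfun, Efun, ssharp]
    rw [Nat.cast_zero, Complex.zero_cpow (neg_ne_zero.mpr hs0), mul_zero, norm_zero]
    have : ((0 / ssharp 0 : ℕ):ℝ) = 0 := by norm_num
    simp only [hgdef, Function.comp_apply, hΦdef]
    rw [this, Real.zero_rpow (by linarith : -σ ≠ 0), mul_zero, mul_zero]
  · set d := Dfun n with hd
    set e := Efun n with he
    set m := n / ssharp n with hm
    have hd0 : (0:ℝ) < (d:ℝ) := by exact_mod_cast Dfun_pos n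
    have he0 : (0:ℝ) < (e:ℝ) := by exact_mod_cast Efun_pos n
    have hd1 : (1:ℝ) ≤ (d:ℝ) := by exact_mod_cast Dfun_pos n
    have he1 : (1:ℝ) ≤ (e:ℝ) := by exact_mod_cast Efun_pos n
    have hm0 : (0:ℝ) ≤ (m:ℝ) := Nat.cast_nonneg _
    have hK1 : (1:ℝ) ≤ (ssharp n : ℝ) := by exact_mod_cast ssharp_pos n
    have hK : (ssharp n : ℝ) = (d:ℝ)^(2:ℕ) * (e:ℝ)^(3:ℕ) := by
      rw [← Dfun_sq_mul_Efun_cube n]; push_cast; ring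
    have hnn : (n:ℝ) = (d:ℝ)^(2:ℕ) * ((e:ℝ)^(3:ℕ) * (m:ℝ)) := by
      conv_lhs => rw [← hrec n]
      push_cast; ring
    rw [norm_mul]
    rw [Complex.norm_natCast_cpow_of_pos (ssharp_pos n), Complex.ofReal_re]
    rw [Complex.norm_natCast_cpow_of_pos (Nat.pos_of_ne_zero hn), Complex.neg_re]
    have step1 : (ssharp n : ℝ) ^ t ≤ (ssharp n : ℝ) ^ ((1:ℝ)/2) :=
      Real.rpow_le_rpow_of_exponent_le hK1 (by linarith)
    have step2 : (ssharp n : ℝ) ^ ((1:ℝ)/2) = (d:ℝ)^(1:ℝ) * (e:ℝ)^((3:ℝ)/2) := by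
      rw [hK, Real.mul_rpow (by positivity) (by positivity),
        ← Real.rpow_natCast (d:ℝ) 2, ← Real.rpow_natCast (e:ℝ) 3,
        ← Real.rpow_mul hd0.le, ← Real.rpow_mul he0.le]
      norm_num
    have step3 : (d:ℝ)^(1:ℝ) * (e:ℝ)^((3:ℝ)/2) ≤ (d:ℝ)^(1:ℝ) * (e:ℝ)^(2:ℝ) := by
      have h1 := Real.rpow_le_rpow_of_exponent_le he1 (by norm_num : (3:ℝ)/2 ≤ 2)
      have h0 : (0:ℝ) ≤ (d:ℝ)^(1:ℝ) := by positivity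
      exact mul_le_mul_of_nonneg_left h1 h0
    have step4 : (n:ℝ) ^ (-σ)
        = (d:ℝ)^((2:ℕ)*(-σ)) * ((e:ℝ)^((3:ℕ)*(-σ)) * (m:ℝ)^(-σ)) := by
      rw [hnn, Real.mul_rpow (by positivity) (by positivity),
        Real.mul_rpow (by positivity) hm0,
        ← Real.rpow_natCast (d:ℝ) 2, ← Real.rpow_natCast (e:ℝ) 3,
        ← Real.rpow_mul hd0.le, ← Real.rpow_mul he0.le]
    have hfinal : ((d:ℝ)^(1:ℝ) * (e:ℝ)^(2:ℝ)) *
        ((d:ℝ)^((2:ℕ)*(-σ)) * ((e:ℝ)^((3:ℕ)*(-σ)) * (m:ℝ)^(-σ)))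
        = g (Φ n) := by
      simp only [hgdef]
      show _ = ((d:ℝ) ^ (1 - 2*σ)) * (((e:ℝ) ^ (2 - 3*σ)) * ((m:ℝ) ^ (-σ)))
      rw [show (1:ℝ) - 2*σ = 1 + (2:ℕ)*(-σ) by push_cast; ring,
        show (2:ℝ) - 3*σ = 2 + (3:ℕ)*(-σ) by push_cast; ring,
        Real.rpow_add hd0, Real.rpow_add he0]
      ring
    calc (ssharp n : ℝ) ^ t * (n:ℝ) ^ (-σ)
        ≤ ((d:ℝ)^(1:ℝ) * (e:ℝ)^(2:ℝ)) * ((n:ℝ) ^ (-σ)) := by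
          have h1 : (ssharp n : ℝ) ^ t ≤ (d:ℝ)^(1:ℝ) * (e:ℝ)^(2:ℝ) :=
            step1.trans (step2 ▸ step3)
          exact mul_le_mul_of_nonneg_right h1 (by positivity)
      _ = g (Φ n) := by rw [step4, hfinal]

private lemma prod_norm_sub_one_le {ι : Type*} (T : Finset ι) (f : ι → ℂ) :
    ‖∏ i ∈ T, f i - 1‖ ≤ ∏ i ∈ T, (1 + ‖f i - 1‖) - 1 := by
  induction T using Finset.cons_induction with
  | empty => simp
  | cons a T ha ih =>
    rw [Finset.prod_cons, Finset.prod_cons]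
    have hQ1 : (1:ℝ) ≤ ∏ i ∈ T, (1 + ‖f i - 1‖) := by
      have := Finset.prod_le_prod (s := T) (f := fun _ => (1:ℝ))
        (g := fun i => 1 + ‖f i - 1‖) (fun i _ => zero_le_one)
        (fun i _ => le_add_of_nonneg_right (norm_nonneg _))
      simpa using this
    have h1 : ‖∏ i ∈ T, f i‖ ≤ ∏ i ∈ T, (1 + ‖f i - 1‖) := by
      calc ‖∏ i ∈ T, f i‖ = ‖(∏ i ∈ T, f i - 1) + 1‖ := by ring_nf
        _ ≤ ‖∏ i ∈ T, f i - 1‖ + 1 := by simpa using norm_add_le (∏ i ∈ T, f i - 1) (1:ℂ)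
        _ ≤ ∏ i ∈ T, (1 + ‖f i - 1‖) := by linarith
    have h2 : f a * ∏ i ∈ T, f i - 1 = (f a - 1) * ∏ i ∈ T, f i + (∏ i ∈ T, f i - 1) := by
      ring
    calc ‖f a * ∏ i ∈ T, f i - 1‖
        ≤ ‖(f a - 1) * ∏ i ∈ T, f i‖ + ‖∏ i ∈ T, f i - 1‖ := by rw [h2]; exact norm_add_le _ _
      _ = ‖f a - 1‖ * ‖∏ i ∈ T, f i‖ + ‖∏ i ∈ T, f i - 1‖ := by rw [norm_mul]
      _ ≤ ‖f a - 1‖ * ∏ i ∈ T, (1 + ‖f i - 1‖) + (∏ i ∈ T, (1 + ‖f i - 1‖) - 1) := by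
          have := norm_nonneg (f a - 1); nlinarith
      _ = (1 + ‖f a - 1‖) * ∏ i ∈ T, (1 + ‖f i - 1‖) - 1 := by ring

private lemma prod_one_add_le_exp {ι : Type*} (T : Finset ι) (g : ι → ℝ) (hg : ∀ i, 0 ≤ g i) :
    ∏ i ∈ T, (1 + g i) ≤ Real.exp (∑ i ∈ T, g i) := by
  rw [Real.exp_sum]
  refine Finset.prod_le_prod (fun i _ => by linarith [hg i]) (fun i _ => ?_)
  rw [add_comm]; exact Real.add_one_le_exp _

private lemma multipliable_of_norm_sub_one {ι : Type*} {f : ι → ℂ}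
    (h : Summable fun i => ‖f i - 1‖) : Multipliable f := by
  classical
  set g := fun i => ‖f i - 1‖ with hgdef
  have hg0 : ∀ i, 0 ≤ g i := fun i => norm_nonneg _
  set M := ∑' i, g i with hMdef
  have hM : ∀ T : Finset ι, ∑ i ∈ T, g i ≤ M := fun T => Summable.sum_le_tsum T (fun i _ => hg0 i) h
  have hc : CauchySeq (fun T : Finset ι => ∏ i ∈ T, f i) := by
    rw [Metric.cauchySeq_iff']
    intro ε hε
    set B := Real.exp M with hBdef
    have hB : 0 < B := Real.exp_pos M
    set δ := Real.log (1 + ε / (2 * B)) with hδdef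
    have hpos : (0:ℝ) < 1 + ε / (2 * B) := by positivity
    have hδpos : 0 < δ := Real.log_pos (by
      have : 0 < ε / (2 * B) := by positivity
      linarith)
    obtain ⟨s₀, hs₀⟩ := summable_iff_vanishing.mp h (Metric.ball 0 δ) (Metric.ball_mem_nhds 0 hδpos)
    refine ⟨s₀, fun T hT => ?_⟩
    have hsub : s₀ ⊆ T := hT
    have hsplit : (∏ i ∈ T \ s₀, f i) * ∏ i ∈ s₀, f i = ∏ i ∈ T, f i := Finset.prod_sdiff hsub
    have hdiff : ∏ i ∈ T, f i - ∏ i ∈ s₀, f i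
        = (∏ i ∈ s₀, f i) * (∏ i ∈ T \ s₀, f i - 1) := by rw [← hsplit]; ring
    have hgT : ∑ i ∈ T \ s₀, g i < δ := by
      have := hs₀ (T \ s₀) Finset.sdiff_disjoint
      rw [Metric.mem_ball, dist_zero_right, Real.norm_eq_abs] at this
      exact (le_abs_self _).trans_lt this
    have hb1 : ‖∏ i ∈ s₀, f i‖ ≤ B := by
      calc ‖∏ i ∈ s₀, f i‖ = ‖(∏ i ∈ s₀, f i - 1) + 1‖ := by ring_nf
        _ ≤ ‖∏ i ∈ s₀, f i - 1‖ + 1 := by simpa using norm_add_le (∏ i ∈ s₀, f i - 1) (1:ℂ)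
        _ ≤ (∏ i ∈ s₀, (1 + g i) - 1) + 1 := by linarith [prod_norm_sub_one_le s₀ f]
        _ = ∏ i ∈ s₀, (1 + g i) := by ring
        _ ≤ Real.exp (∑ i ∈ s₀, g i) := prod_one_add_le_exp s₀ g hg0
        _ ≤ B := Real.exp_le_exp.mpr (hM s₀)
    have hb2 : ‖∏ i ∈ T \ s₀, f i - 1‖ ≤ ε / (2 * B) := by
      calc ‖∏ i ∈ T \ s₀, f i - 1‖ ≤ ∏ i ∈ T \ s₀, (1 + g i) - 1 :=
            prod_norm_sub_one_le _ f
        _ ≤ Real.exp (∑ i ∈ T \ s₀, g i) - 1 := by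
            linarith [prod_one_add_le_exp (T \ s₀) g hg0]
        _ ≤ Real.exp δ - 1 := by
            have := Real.exp_le_exp.mpr hgT.le; linarith
        _ = ε / (2 * B) := by rw [hδdef, Real.exp_log hpos]; ring
    rw [dist_eq_norm, hdiff, norm_mul]
    calc ‖∏ i ∈ s₀, f i‖ * ‖∏ i ∈ T \ s₀, f i - 1‖ ≤ B * (ε / (2 * B)) := by
          exact mul_le_mul hb1 hb2 (norm_nonneg _) hB.le
      _ = ε / 2 := by field_simp
      _ < ε := by linarith
  obtain ⟨l, hl⟩ := cauchySeq_tendsto_of_complete hc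
  exact ⟨l, hl⟩

open Complex in
private lemma ssharp_cpow_eq (t : ℝ) {p : ℕ} (hp : p.Prime) (ν : ℕ) :
    ((ssharp (p ^ ν) : ℕ) : ℂ) ^ (t:ℂ)
      = if ν ≤ 1 then 1 else ((((p:ℝ) ^ t : ℝ)) : ℂ) ^ ν := by
  rw [ssharp_prime_pow hp]
  split_ifs with h
  · rw [Nat.cast_one, Complex.one_cpow]
  · have hP0 : (0:ℝ) ≤ (p:ℝ) := Nat.cast_nonneg p
    have h1 : ((p ^ ν : ℕ) : ℂ) = ((((p:ℝ) ^ (ν:ℕ)) : ℝ) : ℂ) := by push_cast; ring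
    rw [h1, ← Complex.ofReal_cpow (by positivity) t, ← Complex.ofReal_pow]
    congr 1
    rw [← Real.rpow_natCast (p:ℝ) ν, ← Real.rpow_mul hP0,
      show ((ν:ℝ) * t) = t * (ν:ℝ) by ring, Real.rpow_mul hP0, Real.rpow_natCast]

private lemma cpow_neg_nat_mul (p : ℕ) (s : ℂ) (ν : ℕ) :
    ((p:ℕ):ℂ) ^ (-(ν:ℂ) * s) = (((p:ℕ):ℂ) ^ (-s)) ^ ν := by
  rw [show (-(ν:ℂ) * s) = (ν:ℂ) * (-s) by ring, Complex.cpow_nat_mul]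

private lemma natCast_pow_cpow (p : ℕ) (ν : ℕ) (w : ℂ) :
    ((p ^ ν : ℕ) : ℂ) ^ w = (((p:ℕ):ℂ) ^ w) ^ ν := by
  induction ν with
  | zero => simp
  | succ ν ih =>
    have h : ((p ^ (ν+1) : ℕ) : ℂ) = (((p:ℝ) ^ ν : ℝ) : ℂ) * (((p:ℝ) : ℝ) : ℂ) := by
      push_cast; ring
    rw [h, Complex.mul_cpow_ofReal_nonneg (by positivity) (Nat.cast_nonneg p),
      show (((p:ℝ) ^ ν : ℝ) : ℂ) = ((p ^ ν : ℕ) : ℂ) by push_cast; ring,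
      show (((p:ℝ)) : ℂ) = ((p:ℕ):ℂ) by push_cast; ring, ih, pow_succ]

private noncomputable def aC (p : ℕ) (s : ℂ) : ℂ := ((p:ℕ):ℂ) ^ (-s)
private noncomputable def cC (t : ℝ) (p : ℕ) (s : ℂ) : ℂ := ((((p:ℝ) ^ t : ℝ)) : ℂ) * aC p s

private lemma norm_aC {p : ℕ} (hp : p.Prime) (s : ℂ) : ‖aC p s‖ = (p:ℝ) ^ (-s.re) := by
  rw [aC, Complex.norm_natCast_cpow_of_pos hp.pos, Complex.neg_re]

private lemma norm_cC (t : ℝ) {p : ℕ} (hp : p.Prime) (s : ℂ) :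
    ‖cC t p s‖ = (p:ℝ) ^ (t - s.re) := by
  have hP0 : (0:ℝ) < (p:ℝ) := Nat.cast_pos.mpr hp.pos
  rw [cC, norm_mul, norm_aC hp, Complex.norm_real, Real.norm_eq_abs,
    abs_of_nonneg (Real.rpow_nonneg hP0.le t), ← Real.rpow_add hP0]
  ring_nf

private lemma one_lt_cast_prime {p : ℕ} (hp : p.Prime) : (1:ℝ) < (p:ℝ) := by
  exact_mod_cast hp.one_lt

private lemma norm_aC_lt {p : ℕ} (hp : p.Prime) {s : ℂ} (h0 : 0 < s.re) : ‖aC p s‖ < 1 := by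
  rw [norm_aC hp]
  exact Real.rpow_lt_one_of_one_lt_of_neg (one_lt_cast_prime hp) (by linarith)

private lemma norm_cC_lt (t : ℝ) {p : ℕ} (hp : p.Prime) {s : ℂ} (hts : t < s.re) :
    ‖cC t p s‖ < 1 := by
  rw [norm_cC t hp]
  exact Real.rpow_lt_one_of_one_lt_of_neg (one_lt_cast_prime hp) (by linarith)

private lemma local_eval (t : ℝ) {p : ℕ} (hp : p.Prime) {s : ℂ} (hts : t < s.re)
    (X : ℕ → ℂ) (hX : ∀ ν, X ν = (((p:ℕ):ℂ) ^ (-s)) ^ ν) :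
    (∑' ν : ℕ, ((ssharp (p ^ ν) : ℕ) : ℂ) ^ (t:ℂ) * X ν)
      = (1 - cC t p s)⁻¹ + (aC p s - cC t p s) := by
  have hc : ‖cC t p s‖ < 1 := norm_cC_lt t hp hts
  have hterm : ∀ ν : ℕ, ((ssharp (p ^ ν) : ℕ) : ℂ) ^ (t:ℂ) * X ν
      = (cC t p s) ^ ν + (if ν = 1 then aC p s - cC t p s else 0) := by
    intro ν
    rw [hX, ssharp_cpow_eq t hp]
    match ν with
    | 0 => simp
    | 1 =>
      rw [if_pos (le_refl 1), if_pos rfl, one_mul, pow_one, pow_one, aC]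
      ring
    | (ν+2) =>
      rw [if_neg (by omega), if_neg (by omega), add_zero, cC, aC, mul_pow]
  rw [tsum_congr hterm,
    Summable.tsum_add (summable_geometric_of_norm_lt_one hc) ((hasSum_ite_eq 1 _).summable),
    tsum_geometric_of_norm_lt_one hc, tsum_ite_eq]

private lemma bC_eq (t : ℝ) {p : ℕ} (hp : p.Prime) (s : ℂ) :
    ((p:ℕ):ℂ) ^ (-(2 * s - 2 * (t:ℂ))) = (cC t p s) ^ 2 := by
  have hp0 : ((p:ℕ):ℂ) ≠ 0 := Nat.cast_ne_zero.mpr hp.pos.ne'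
  have hr : ((((p:ℝ) ^ t : ℝ)) : ℂ) = ((p:ℕ):ℂ) ^ ((t:ℝ):ℂ) := by
    rw [Complex.ofReal_cpow (Nat.cast_nonneg p) t, Complex.ofReal_natCast]
  rw [show -(2 * s - 2 * (t:ℂ)) = (-s) + ((-s) + (((t:ℝ):ℂ) + ((t:ℝ):ℂ))) by push_cast; ring,
    Complex.cpow_add _ _ hp0, Complex.cpow_add _ _ hp0, Complex.cpow_add _ _ hp0,
    cC, aC, ← hr]
  ring

private lemma factor_eq (t : ℝ) {p : ℕ} (hp : p.Prime) {s : ℂ} (hts : t < s.re) :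
    (∑' ν : ℕ, ((ssharp (p ^ ν) : ℕ) : ℂ) ^ (t:ℂ) * ((p:ℕ):ℂ) ^ (-(ν:ℂ) * s)) *
      (1 - ((p:ℕ):ℂ) ^ (-s)) * (1 - ((p:ℕ):ℂ) ^ (-(2 * s - 2 * (t:ℂ))))
    = 1 + ((cC t p s)^3 - (aC p s)^2 - aC p s * (cC t p s)^2 - aC p s * (cC t p s)^3
        + (aC p s)^2 * (cC t p s)^2) := by
  rw [local_eval t hp hts _ (cpow_neg_nat_mul p s), bC_eq t hp s, show ((p:ℕ):ℂ) ^ (-s) = aC p s from rfl]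
  have hc1 : (1:ℂ) - cC t p s ≠ 0 := sub_ne_zero.2 (fun h => by
    have h2 := norm_cC_lt t hp hts
    rw [← h, norm_one] at h2
    exact lt_irrefl 1 h2)
  field_simp
  ring

private lemma summable_primes_rpow {x : ℝ} (hx : x < -1) :
    Summable (fun p : Nat.Primes => ((p:ℕ):ℝ) ^ x) :=
  (Real.summable_nat_rpow.mpr hx).comp_injective Nat.Primes.coe_nat_injective

private lemma multipliable_factor (t : ℝ) (ht : t ≤ 1/2) (s : ℂ)
    (hσ : max (t + 1/3) (1/2) < s.re) :
    Multipliable (fun p : Nat.Primes =>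
      (∑' ν : ℕ, ((ssharp ((p:ℕ) ^ ν) : ℕ) : ℂ) ^ (t:ℂ) * (((p:ℕ)):ℂ) ^ (-(ν:ℂ) * s)) *
        (1 - ((p:ℕ):ℂ) ^ (-s)) * (1 - ((p:ℕ):ℂ) ^ (-(2 * s - 2 * (t:ℂ))))) := by
  have h13 : t + 1/3 < s.re := lt_of_le_of_lt (le_max_left _ _) hσ
  have h12 : 1/2 < s.re := lt_of_le_of_lt (le_max_right _ _) hσ
  have hts : t < s.re := by linarith
  apply multipliable_of_norm_sub_one
  have hbound : ∀ p : Nat.Primes, ‖(∑' ν : ℕ, ((ssharp ((p:ℕ) ^ ν) : ℕ) : ℂ) ^ (t:ℂ) *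
        (((p:ℕ)):ℂ) ^ (-(ν:ℂ) * s)) *
        (1 - ((p:ℕ):ℂ) ^ (-s)) * (1 - ((p:ℕ):ℂ) ^ (-(2 * s - 2 * (t:ℂ)))) - 1‖
      ≤ ((p:ℕ):ℝ) ^ ((t - s.re) * 3) + (((p:ℕ):ℝ) ^ ((-s.re) * 2)
        + (((p:ℕ):ℝ) ^ (-s.re + (t - s.re) * 2) + (((p:ℕ):ℝ) ^ (-s.re + (t - s.re) * 3)
        + ((p:ℕ):ℝ) ^ ((-s.re) * 2 + (t - s.re) * 2)))) := by
    intro p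
    have hp : (p:ℕ).Prime := p.prop
    have hP0 : (0:ℝ) < ((p:ℕ):ℝ) := Nat.cast_pos.mpr hp.pos
    set a := aC (p:ℕ) s with hadef
    set c := cC t (p:ℕ) s with hcdef
    rw [factor_eq t hp hts, add_sub_cancel_left]
    have eC : ∀ k : ℕ, ‖c‖ ^ k = ((p:ℕ):ℝ) ^ ((t - s.re) * k) := fun k => by
      rw [hcdef, norm_cC t hp, ← Real.rpow_natCast (((p:ℕ):ℝ) ^ (t - s.re)) k,
        ← Real.rpow_mul hP0.le]
    have eA : ∀ k : ℕ, ‖a‖ ^ k = ((p:ℕ):ℝ) ^ ((-s.re) * k) := fun k => by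
      rw [hadef, norm_aC hp, ← Real.rpow_natCast (((p:ℕ):ℝ) ^ (-s.re)) k,
        ← Real.rpow_mul hP0.le]
    calc ‖c^3 - a^2 - a * c^2 - a * c^3 + a^2 * c^2‖
        ≤ ‖c^3‖ + (‖a^2‖ + (‖a * c^2‖ + (‖a * c^3‖ + ‖a^2 * c^2‖))) := by
          calc ‖c^3 - a^2 - a * c^2 - a * c^3 + a^2 * c^2‖
              ≤ ‖c^3 - a^2 - a * c^2 - a * c^3‖ + ‖a^2 * c^2‖ := norm_add_le _ _
            _ ≤ (‖c^3 - a^2 - a * c^2‖ + ‖a * c^3‖) + ‖a^2 * c^2‖ :=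
                by have := norm_sub_le (c^3 - a^2 - a * c^2) (a * c^3); linarith
            _ ≤ ((‖c^3 - a^2‖ + ‖a * c^2‖) + ‖a * c^3‖) + ‖a^2 * c^2‖ :=
                by have := norm_sub_le (c^3 - a^2) (a * c^2); linarith
            _ ≤ (((‖c^3‖ + ‖a^2‖) + ‖a * c^2‖) + ‖a * c^3‖) + ‖a^2 * c^2‖ :=
                by have := norm_sub_le (c^3) (a^2); linarith
            _ = ‖c^3‖ + (‖a^2‖ + (‖a * c^2‖ + (‖a * c^3‖ + ‖a^2 * c^2‖))) := by ring
      _ = ((p:ℕ):ℝ) ^ ((t - s.re) * 3) + (((p:ℕ):ℝ) ^ ((-s.re) * 2)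
        + (((p:ℕ):ℝ) ^ (-s.re + (t - s.re) * 2) + (((p:ℕ):ℝ) ^ (-s.re + (t - s.re) * 3)
        + ((p:ℕ):ℝ) ^ ((-s.re) * 2 + (t - s.re) * 2))) ) := by
          simp only [norm_pow, norm_mul]
          rw [show ‖a‖ = ((p:ℕ):ℝ) ^ ((-s.re)) from by rw [hadef, norm_aC hp],
            show ‖c‖ = ((p:ℕ):ℝ) ^ ((t - s.re)) from by rw [hcdef, norm_cC t hp],
            ← Real.rpow_natCast (((p:ℕ):ℝ) ^ (t - s.re)) 2,
            ← Real.rpow_natCast (((p:ℕ):ℝ) ^ (t - s.re)) 3,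
            ← Real.rpow_natCast (((p:ℕ):ℝ) ^ (-s.re)) 2,
            ← Real.rpow_mul hP0.le, ← Real.rpow_mul hP0.le, ← Real.rpow_mul hP0.le,
            ← Real.rpow_add hP0, ← Real.rpow_add hP0, ← Real.rpow_add hP0]
          norm_num
  refine Summable.of_nonneg_of_le (fun p => norm_nonneg _) hbound ?_
  refine Summable.add (summable_primes_rpow (by linarith)) ?_
  refine Summable.add (summable_primes_rpow (by linarith)) ?_
  refine Summable.add (summable_primes_rpow (by linarith)) ?_
  exact Summable.add (summable_primes_rpow (by linarith)) (summable_primes_rpow (by linarith))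

theorem stmt_12 (t : ℝ) (ht : t ≤ 1 / 2) :
    ∃ A : ℂ → ℂ,
      (∀ s : ℂ, max (t + 1 / 3) (1 / 2) < s.re →
        Multipliable (fun p : Nat.Primes =>
          (∑' ν : ℕ, ((ssharp ((p : ℕ) ^ ν) : ℂ)) ^ (t : ℂ) * ((p : ℕ) : ℂ) ^ (-(ν : ℂ) * s)) *
            (1 - ((p : ℕ) : ℂ) ^ (-s)) * (1 - ((p : ℕ) : ℂ) ^ (-(2 * s - 2 * (t : ℂ)))) ) ∧
        A s = ∏' p : Nat.Primes,
          (∑' ν : ℕ, ((ssharp ((p : ℕ) ^ ν) : ℂ)) ^ (t : ℂ) * ((p : ℕ) : ℂ) ^ (-(ν : ℂ) * s)) *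
            (1 - ((p : ℕ) : ℂ) ^ (-s)) * (1 - ((p : ℕ) : ℂ) ^ (-(2 * s - 2 * (t : ℂ))))) ∧
      (∀ s : ℂ, 1 < s.re →
        ∑' n : ℕ, ((ssharp (n + 1) : ℂ)) ^ (t : ℂ) * (((n : ℂ) + 1) ^ s)⁻¹
          = riemannZeta s * riemannZeta (2 * s - 2 * (t : ℂ)) * A s) := by
  refine ⟨fun s => ∏' p : Nat.Primes,
      (∑' ν : ℕ, ((ssharp ((p : ℕ) ^ ν) : ℂ)) ^ (t : ℂ) * ((p : ℕ) : ℂ) ^ (-(ν : ℂ) * s)) *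
        (1 - ((p : ℕ) : ℂ) ^ (-s)) * (1 - ((p : ℕ) : ℂ) ^ (-(2 * s - 2 * (t : ℂ)))),
    fun s hσ => ⟨multipliable_factor t ht s hσ, rfl⟩, fun s hs => ?_⟩
  have hwide : max (t + 1/3) (1/2) < s.re := by
    rw [max_lt_iff]; constructor <;> linarith
  have hts : t < s.re := by linarith
  have h0 : 0 < s.re := by linarith
  have hs0 : s ≠ 0 := fun h => by rw [h, Complex.zero_re] at hs; linarith
  have hre2 : (2 * s - 2 * (t:ℂ)).re = 2 * s.re - 2 * t := by
    simp [Complex.sub_re, Complex.mul_re]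
  have hs2 : 1 < (2 * s - 2 * (t:ℂ)).re := by rw [hre2]; linarith
  set f : ℕ → ℂ := fun n => (ssharp n : ℂ) ^ (t:ℂ) * (n:ℂ) ^ (-s) with hfdef
  have hf0 : f 0 = 0 := by
    rw [hfdef]
    simp only [Nat.cast_zero]
    rw [Complex.zero_cpow (neg_ne_zero.mpr hs0), mul_zero]
  have hf1 : f 1 = 1 := by
    rw [hfdef]
    simp only [ssharp_one, Nat.cast_one, Complex.one_cpow, mul_one]
  have hmul : ∀ {m n : ℕ}, Nat.Coprime m n → f (m * n) = f m * f n := by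
    intro m n hmn
    rcases eq_or_ne m 0 with rfl | hm
    · have hn1 : n = 1 := by simpa using hmn
      subst hn1; rw [mul_one, hf1, mul_one]
    · rcases eq_or_ne n 0 with rfl | hn
      · have hm1 : m = 1 := by simpa using hmn
        subst hm1; rw [one_mul, hf1, one_mul]
      · rw [hfdef]
        simp only
        rw [ssharp_mul hmn hm hn]
        have h1 : ((ssharp m * ssharp n : ℕ):ℂ) ^ (t:ℂ)
            = (ssharp m : ℂ) ^ (t:ℂ) * (ssharp n : ℂ) ^ (t:ℂ) := by
          have h := Complex.mul_cpow_ofReal_nonneg (a := (ssharp m : ℝ)) (b := (ssharp n : ℝ))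
            (Nat.cast_nonneg _) (Nat.cast_nonneg _) (t:ℂ)
          push_cast at h ⊢
          exact h
        have h2 : ((m * n : ℕ):ℂ) ^ (-s) = (m:ℂ) ^ (-s) * (n:ℂ) ^ (-s) := by
          have h := Complex.mul_cpow_ofReal_nonneg (a := (m : ℝ)) (b := (n : ℝ))
            (Nat.cast_nonneg _) (Nat.cast_nonneg _) (-s)
          push_cast at h ⊢
          exact h
        rw [h1, h2]; ring
  have hsum : Summable (fun n => ‖f n‖) := summable_norm_f t ht s hs
  have hEP := EulerProduct.eulerProduct_hasProd hf1 hmul hsum hf0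
  have hLHS : (∑' n : ℕ, ((ssharp (n + 1) : ℂ)) ^ (t : ℂ) * (((n : ℂ) + 1) ^ s)⁻¹)
      = ∑' n : ℕ, f n := by
    have h1 : ∀ n : ℕ, ((ssharp (n + 1) : ℂ)) ^ (t : ℂ) * (((n : ℂ) + 1) ^ s)⁻¹ = f (n + 1) := by
      intro n
      rw [hfdef]
      simp only
      rw [← Complex.cpow_neg, show ((n + 1 : ℕ):ℂ) = (n:ℂ) + 1 by push_cast; ring]
    rw [tsum_congr h1, Summable.tsum_eq_zero_add hsum.of_norm, hf0, zero_add]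
  rw [hLHS, ← hEP.tprod_eq]
  rw [← riemannZeta_eulerProduct_tprod hs, ← riemannZeta_eulerProduct_tprod hs2]
  have m1 := (riemannZeta_eulerProduct_hasProd hs).multipliable
  have m2 := (riemannZeta_eulerProduct_hasProd hs2).multipliable
  have m3 := multipliable_factor t ht s hwide
  rw [← Multipliable.tprod_mul m1 m2, ← Multipliable.tprod_mul (m1.mul m2) m3]
  refine tprod_congr fun p => ?_
  have hp : (p:ℕ).Prime := p.prop
  have ha1 : (1:ℂ) - ((p:ℕ):ℂ) ^ (-s) ≠ 0 := by
    refine sub_ne_zero.2 fun h => ?_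
    have h2 := norm_aC_lt hp h0
    rw [aC, ← h, norm_one] at h2
    exact lt_irrefl 1 h2
  have hb1 : (1:ℂ) - ((p:ℕ):ℂ) ^ (-(2 * s - 2 * (t:ℂ))) ≠ 0 := by
    refine sub_ne_zero.2 fun h => ?_
    have h2 : ‖((p:ℕ):ℂ) ^ (-(2 * s - 2 * (t:ℂ)))‖ < 1 := by
      rw [Complex.norm_natCast_cpow_of_pos hp.pos, Complex.neg_re, hre2]
      exact Real.rpow_lt_one_of_one_lt_of_neg (one_lt_cast_prime hp) (by linarith)
    rw [← h, norm_one] at h2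
    exact lt_irrefl 1 h2
  have hfe : (∑' e : ℕ, f ((p:ℕ) ^ e))
      = (1 - cC t (p:ℕ) s)⁻¹ + (aC (p:ℕ) s - cC t (p:ℕ) s) := by
    rw [hfdef]
    simp only
    exact local_eval t hp hts _ (fun ν => natCast_pow_cpow (p:ℕ) ν (-s))
  have hse : (∑' ν : ℕ, ((ssharp ((p : ℕ) ^ ν) : ℂ)) ^ (t : ℂ) * ((p : ℕ) : ℂ) ^ (-(ν : ℂ) * s))
      = (1 - cC t (p:ℕ) s)⁻¹ + (aC (p:ℕ) s - cC t (p:ℕ) s) :=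
    local_eval t hp hts _ (cpow_neg_nat_mul (p:ℕ) s)
  rw [hfe, hse]
  have key : ∀ (x y F : ℂ), x ≠ 0 → y ≠ 0 → F = x⁻¹ * y⁻¹ * (F * x * y) := by
    intro x y F hx hy
    field_simp
  exact key _ _ _ ha1 hb1
end
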